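/- arXiv:1603.07043 — 6 statements merged into one kernel-verified Lean document; each statement's English description precedes it below -/
import Mathlib

section
/- Let A and B be non-negative compact contractions on a Hilbert space (or positive semidefinite n×n matrices with A ≤ 𝟙 and B ≤ 𝟙), and let t ∈ (0,1). Define A ⋆_t B = t·A + (1−t)·B + i·√(t(1−t))·[A,B]. Then the largest eigenvalue satisfies λ₁(A ⋆_t B) ≤ t·λ₁(A) + (1−t)·λ₁(B). -/
open Matrix ComplexOrder

/-- Eigenvalues of a Hermitian matrix listed in non-increasing order:
`eigDesc hA j` is the `j`-th largest eigenvalue of `A`. -/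
noncomputable def eigDesc {n : ℕ} {A : Matrix (Fin n) (Fin n) ℂ} (hA : A.IsHermitian) :
    Fin n → ℝ :=
  fun j => hA.eigenvalues (Tuple.sort hA.eigenvalues (Fin.rev j))

/-- The partial-swap convolution `A ⋆_t B = tA + (1-t)B + i√(t(1-t))[A,B]`. -/
noncomputable def pswap {n : ℕ} (t : ℝ) (A B : Matrix (Fin n) (Fin n) ℂ) :
    Matrix (Fin n) (Fin n) ℂ :=
  (t : ℂ) • A + ((1 - t : ℝ) : ℂ) • B
    + (Complex.I * (Real.sqrt (t * (1 - t)) : ℂ)) • (A * B - B * A)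

/-!
Write `a = λ₁(A)` and `b = λ₁(B)`. Commutators do not see scalar shifts, so
`(ta + (1-t)b)·𝟙 - A ⋆_t B = (b𝟙 - B) ⋆_{1-t} (a𝟙 - A)`, and `a𝟙 - A`, `b𝟙 - B` are again
contractions. It therefore suffices that `X ⋆_s Y ≥ 0` for contractions `X, Y`, which follows from
`X ⋆_s Y = N⋆N + s(X - X²) + (1-s)(Y - Y²)` with `N = √s X + i√(1-s) Y`, and
`X - X² = (1-X)X(1-X) + X(1-X)X ≥ 0`.
-/

open scoped MatrixOrder

theorem sub_mul_self_nonneg_of_le_one {R : Type*} [Ring R] [PartialOrder R] [StarRing R]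
    [StarOrderedRing R] {x : R} (h0 : 0 ≤ x) (h1 : x ≤ 1) : 0 ≤ x - x * x := by
  have h1' : 0 ≤ 1 - x := sub_nonneg.2 h1
  have hsplit : x - x * x = (1 - x) * x * (1 - x) + x * (1 - x) * x := by noncomm_ring
  rw [hsplit]
  exact add_nonneg (conjugate_nonneg_of_nonneg h0 h1') (conjugate_nonneg_of_nonneg h1' h0)

namespace Matrix

variable {𝕜 ι : Type*} [RCLike 𝕜] [DecidableEq ι]

theorem smul_one_sub_le_one {A : Matrix ι ι 𝕜} (hA : 0 ≤ A) {a : ℝ} (ha : a ≤ 1) :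
    (a : 𝕜) • 1 - A ≤ 1 := by
  rw [le_iff, show (1 : Matrix ι ι 𝕜) - ((a : 𝕜) • 1 - A) = A + (1 - a) • 1 by
    rw [sub_smul, one_smul, RCLike.real_smul_eq_coe_smul (K := 𝕜)]; abel]
  exact hA.posSemidef.add (PosSemidef.one.smul (sub_nonneg.2 ha))

variable [Fintype ι]

theorem IsHermitian.le_smul_one_iff {M : Matrix ι ι 𝕜} (hM : M.IsHermitian) (r : ℝ) :
    M ≤ (r : 𝕜) • 1 ↔ ∀ i, hM.eigenvalues i ≤ r := by
  rw [← RCLike.real_smul_eq_coe_smul, ← Algebra.algebraMap_eq_smul_one,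
    le_algebraMap_iff_spectrum_le hM.isSelfAdjoint, hM.spectrum_real_eq_range_eigenvalues,
    Set.forall_mem_range]

end Matrix

section eigDesc

variable {n : ℕ} [NeZero n]

theorem eigenvalues_le_eigDesc_zero {M : Matrix (Fin n) (Fin n) ℂ} (hM : M.IsHermitian)
    (i : Fin n) : hM.eigenvalues i ≤ eigDesc hM 0 := by
  have hle : (Tuple.sort hM.eigenvalues).symm i ≤ Fin.rev 0 := by
    rw [Fin.le_rev_iff]; exact Fin.zero_le _
  simpa [eigDesc] using Tuple.monotone_sort hM.eigenvalues hle

theorem eigDesc_zero_le_iff {M : Matrix (Fin n) (Fin n) ℂ} (hM : M.IsHermitian) {r : ℝ} :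
    eigDesc hM 0 ≤ r ↔ M ≤ (r : ℂ) • 1 := by
  refine Iff.trans ?_ (hM.le_smul_one_iff r).symm
  exact ⟨fun h i => (eigenvalues_le_eigDesc_zero hM i).trans h, fun h => h _⟩

theorem le_eigDesc_zero_smul_one {M : Matrix (Fin n) (Fin n) ℂ} (hM : M.IsHermitian) :
    M ≤ (eigDesc hM 0 : ℂ) • 1 :=
  (eigDesc_zero_le_iff hM).1 le_rfl

theorem eigDesc_zero_smul_one_sub_mem_Icc {A : Matrix (Fin n) (Fin n) ℂ} (hA : A.PosSemidef)
    (hA1 : A ≤ 1) : (eigDesc hA.isHermitian 0 : ℂ) • 1 - A ∈ Set.Icc 0 1 := by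
  have hmax : eigDesc hA.isHermitian 0 ≤ 1 :=
    (eigDesc_zero_le_iff hA.isHermitian).2 (by rwa [Complex.ofReal_one, one_smul])
  exact ⟨sub_nonneg.2 (le_eigDesc_zero_smul_one hA.isHermitian),
    smul_one_sub_le_one hA.nonneg hmax⟩

end eigDesc

section pswap

variable {n : ℕ}

theorem pswap_eq_star_mul_self_add {t : ℝ} (ht0 : 0 ≤ t) (ht1 : t ≤ 1)
    {X Y : Matrix (Fin n) (Fin n) ℂ} (hX : X.IsHermitian) (hY : Y.IsHermitian) :
    let N := (Real.sqrt t : ℂ) • X + (Complex.I * Real.sqrt (1 - t)) • Y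
    pswap t X Y = star N * N + (t : ℂ) • (X - X * X) + ((1 - t : ℝ) : ℂ) • (Y - Y * Y) := by
  intro N
  have hN : star N = (Real.sqrt t : ℂ) • X - (Complex.I * Real.sqrt (1 - t)) • Y := by
    simp only [N, star_add, star_smul, hX.isSelfAdjoint.star_eq, hY.isSelfAdjoint.star_eq,
      Complex.star_def, map_mul, Complex.conj_I, Complex.conj_ofReal, neg_mul, neg_smul,
      ← sub_eq_add_neg]
  have ht : ((Real.sqrt t : ℝ) : ℂ) * Real.sqrt t = t := by
    rw [← Complex.ofReal_mul, Real.mul_self_sqrt ht0]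
  have ht' : ((Real.sqrt (1 - t) : ℝ) : ℂ) * Real.sqrt (1 - t) = 1 - t := by
    rw [← Complex.ofReal_mul, Real.mul_self_sqrt (sub_nonneg.2 ht1)]; push_cast; ring
  have hs : ((Real.sqrt (t * (1 - t)) : ℝ) : ℂ) = Real.sqrt t * Real.sqrt (1 - t) := by
    rw [Real.sqrt_mul ht0, Complex.ofReal_mul]
  rw [hN, pswap, hs]
  simp only [N, Matrix.mul_add, Matrix.sub_mul, smul_mul_smul_comm]
  match_scalars
  · ring
  · ring
  · ring
  · ring
  · linear_combination -ht
  · linear_combination ((Real.sqrt (1 - t) : ℂ) * Real.sqrt (1 - t)) * Complex.I_sq - ht'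

theorem pswap_nonneg {t : ℝ} (ht0 : 0 ≤ t) (ht1 : t ≤ 1) {X Y : Matrix (Fin n) (Fin n) ℂ}
    (hX0 : 0 ≤ X) (hX1 : X ≤ 1) (hY0 : 0 ≤ Y) (hY1 : Y ≤ 1) : 0 ≤ pswap t X Y := by
  rw [pswap_eq_star_mul_self_add ht0 ht1 hX0.posSemidef.isHermitian hY0.posSemidef.isHermitian]
  refine add_nonneg (add_nonneg (star_mul_self_nonneg _) ?_) ?_
  · exact ((sub_mul_self_nonneg_of_le_one hX0 hX1).posSemidef.smul ht0).nonneg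
  · exact ((sub_mul_self_nonneg_of_le_one hY0 hY1).posSemidef.smul (sub_nonneg.2 ht1)).nonneg

theorem smul_one_sub_pswap (t a b : ℝ) (A B : Matrix (Fin n) (Fin n) ℂ) :
    ((t * a + (1 - t) * b : ℝ) : ℂ) • 1 - pswap t A B
      = pswap (1 - t) ((b : ℂ) • 1 - B) ((a : ℂ) • 1 - A) := by
  have hs : (1 - t) * (1 - (1 - t)) = t * (1 - t) := by ring
  have hc : ((b : ℂ) • 1 - B) * ((a : ℂ) • 1 - A) - ((a : ℂ) • 1 - A) * ((b : ℂ) • 1 - B)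
      = -(A * B - B * A) := by
    simp only [Matrix.mul_sub, Matrix.sub_mul, Matrix.mul_smul, Matrix.smul_mul, Matrix.one_mul,
      Matrix.mul_one]
    module
  rw [pswap, pswap, hs, hc]
  push_cast
  module

end pswap

theorem stmt_2 {n : ℕ} [NeZero n] (t : ℝ) (ht : t ∈ Set.Ioo (0 : ℝ) 1)
    (A B : Matrix (Fin n) (Fin n) ℂ)
    (hA : A.PosSemidef) (hB : B.PosSemidef)
    (hA1 : (1 - A).PosSemidef) (hB1 : (1 - B).PosSemidef)
    (hC : (pswap t A B).IsHermitian) :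
    eigDesc hC 0 ≤ t * eigDesc hA.isHermitian 0 + (1 - t) * eigDesc hB.isHermitian 0 := by
  obtain ⟨hA'0, hA'1⟩ := eigDesc_zero_smul_one_sub_mem_Icc hA hA1
  obtain ⟨hB'0, hB'1⟩ := eigDesc_zero_smul_one_sub_mem_Icc hB hB1
  have hgap := pswap_nonneg (sub_nonneg.2 ht.2.le) (sub_le_self _ ht.1.le) hB'0 hB'1 hA'0 hA'1
  rw [← smul_one_sub_pswap, sub_nonneg] at hgap
  exact (eigDesc_zero_le_iff hC).2 hgap
end

section
/- Let A, B be non-negative contractions with A ≤ 𝟙, B ≤ 𝟙, t ∈ (0,1), X = λ₁(A)𝟙 − A, Y = λ₁(B)𝟙 − B, and Z = √t·X + i·√(1−t)·Y. Then i·√(t(1−t))·[A,B] = −Z Z* + t·X² + (1−t)·Y², and consequently (t·λ₁(A) + (1−t)·λ₁(B))·𝟙 − A ⋆_t B = t(X − X²) + (1−t)(Y − Y²) + Z Z*, which is positive semidefinite. -/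
/-!
Scalars drop out of commutators, so `[A, B] = [X, Y]`, and for self-adjoint `X`, `Y` expanding
`Z Z*` gives `t X² + (1 - t) Y² - i √(t(1-t)) [X, Y]`; substituting this into `A ⋆_t B` yields
the decomposition. Each summand is positive semidefinite: `0 ≤ X ≤ 𝟙` because the spectrum of `A`
lies in `[0, λ₁(A)]` and `λ₁(A) ≤ 1`, and `X - X² = X (𝟙 - X)` is a product of commuting
positive elements.
-/

open Matrix ComplexOrder

lemma commutator_smul_one_sub {K R : Type*} [CommRing K] [Ring R] [Algebra K R] (c d : K)
    (a b : R) : (c • 1 - a) * (d • 1 - b) - (d • 1 - b) * (c • 1 - a) = a * b - b * a := by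
  simp only [sub_mul, mul_sub, smul_mul_assoc, mul_smul_comm, one_mul, mul_one]
  module

lemma smul_add_I_smul_mul_star {R : Type*} [Ring R] [StarRing R] [Algebra ℂ R] [StarModule ℂ R]
    {x y : R} (hx : IsSelfAdjoint x) (hy : IsSelfAdjoint y) (a b : ℝ) :
    ((a : ℂ) • x + (Complex.I * b) • y) * star ((a : ℂ) • x + (Complex.I * b) • y)
      = ((a * a : ℝ) : ℂ) • (x * x) + ((b * b : ℝ) : ℂ) • (y * y)
        - (Complex.I * (a * b : ℝ)) • (x * y - y * x) := by
  simp only [star_add, star_smul, hx.star_eq, hy.star_eq, Complex.star_def, map_mul,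
    Complex.conj_ofReal, Complex.conj_I, add_mul, mul_add, smul_mul_smul_comm, smul_sub]
  match_scalars
  · ring
  · ring
  · ring
  · linear_combination (-(b : ℂ) * b) * Complex.I_mul_I

open scoped MatrixOrder

lemma Matrix.PosSemidef.sub_mul_self {ι 𝕜 : Type*} [Fintype ι] [DecidableEq ι] [RCLike 𝕜]
    {X : Matrix ι ι 𝕜} (hX : X.PosSemidef) (hX1 : (1 - X).PosSemidef) :
    (X - X * X).PosSemidef := by
  rw [← mul_one_sub]
  exact (Commute.mul_nonneg hX.nonneg hX1.nonneg ((Commute.one_right X).sub_right rfl)).posSemidef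

section TopEigenvalue

variable {n : ℕ} {A : Matrix (Fin n) (Fin n) ℂ} (hA : A.IsHermitian)
include hA

lemma eigDesc_mem_spectrum (j : Fin n) : eigDesc hA j ∈ spectrum ℝ A := by
  rw [hA.spectrum_real_eq_range_eigenvalues]
  exact Set.mem_range_self _

lemma eigenvalues_le_eigDesc_zero_s4 [NeZero n] (i : Fin n) : hA.eigenvalues i ≤ eigDesc hA 0 := by
  obtain ⟨k, rfl⟩ := (Tuple.sort hA.eigenvalues).surjective i
  refine Tuple.monotone_sort hA.eigenvalues ?_
  rw [Fin.le_def, Fin.val_rev, Fin.val_zero]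
  omega

lemma posSemidef_eigDesc_zero_smul_one_sub [NeZero n] :
    ((eigDesc hA 0 : ℂ) • 1 - A).PosSemidef := by
  have : A ≤ algebraMap ℝ _ (eigDesc hA 0) := le_algebraMap_of_spectrum_le fun x hx => by
    obtain ⟨i, rfl⟩ := hA.spectrum_real_eq_range_eigenvalues ▸ hx
    exact eigenvalues_le_eigDesc_zero_s4 hA i
  rwa [Algebra.algebraMap_eq_smul_one, ← Complex.coe_smul] at this

lemma eigDesc_le_one (hA1 : (1 - A).PosSemidef) (j : Fin n) : eigDesc hA j ≤ 1 :=
  (CFC.le_one_iff A).mp (sub_nonneg.mp hA1.nonneg) _ (eigDesc_mem_spectrum hA j)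

end TopEigenvalue

lemma posSemidef_one_sub_eigDesc_zero_smul_one_sub {n : ℕ} [NeZero n]
    {A : Matrix (Fin n) (Fin n) ℂ} (hA : A.PosSemidef) (hA1 : (1 - A).PosSemidef) :
    (1 - ((eigDesc hA.isHermitian 0 : ℂ) • 1 - A)).PosSemidef := by
  have hc : (0 : ℂ) ≤ ((1 - eigDesc hA.isHermitian 0 : ℝ) : ℂ) :=
    Complex.zero_le_real.mpr (sub_nonneg.mpr (eigDesc_le_one hA.isHermitian hA1 0))
  convert (PosSemidef.one.smul hc).add hA using 1
  push_cast
  module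

theorem stmt_4 {n : ℕ} [NeZero n] (t : ℝ) (ht : t ∈ Set.Ioo (0 : ℝ) 1)
    (A B X Y Z : Matrix (Fin n) (Fin n) ℂ)
    (hA : A.PosSemidef) (hB : B.PosSemidef)
    (hA1 : (1 - A).PosSemidef) (hB1 : (1 - B).PosSemidef)
    (hX : X = (eigDesc hA.isHermitian 0 : ℂ) • 1 - A)
    (hY : Y = (eigDesc hB.isHermitian 0 : ℂ) • 1 - B)
    (hZ : Z = (Real.sqrt t : ℂ) • X + (Complex.I * (Real.sqrt (1 - t) : ℂ)) • Y) :
    (Complex.I * (Real.sqrt (t * (1 - t)) : ℂ)) • (A * B - B * A)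
        = -(Z * Zᴴ) + (t : ℂ) • (X * X) + ((1 - t : ℝ) : ℂ) • (Y * Y) ∧
    ((t * eigDesc hA.isHermitian 0 + (1 - t) * eigDesc hB.isHermitian 0 : ℝ) : ℂ) • 1
        - pswap t A B
      = (t : ℂ) • (X - X * X) + ((1 - t : ℝ) : ℂ) • (Y - Y * Y) + Z * Zᴴ ∧
    (((t * eigDesc hA.isHermitian 0 + (1 - t) * eigDesc hB.isHermitian 0 : ℝ) : ℂ) • 1
        - pswap t A B).PosSemidef := by
  obtain ⟨ht0, ht1⟩ := ht
  have hX0 : X.PosSemidef := hX ▸ posSemidef_eigDesc_zero_smul_one_sub hA.isHermitian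
  have hY0 : Y.PosSemidef := hY ▸ posSemidef_eigDesc_zero_smul_one_sub hB.isHermitian
  have hXY : X * Y - Y * X = A * B - B * A := by
    rw [hX, hY, commutator_smul_one_sub]
  have hZZ := smul_add_I_smul_mul_star hX0.isHermitian hY0.isHermitian √t √(1 - t)
  rw [Real.mul_self_sqrt ht0.le, Real.mul_self_sqrt (by linarith), ← Real.sqrt_mul ht0.le,
    ← hZ, star_eq_conjTranspose, hXY] at hZZ
  have hcomm : (Complex.I * (Real.sqrt (t * (1 - t)) : ℂ)) • (A * B - B * A)
      = -(Z * Zᴴ) + (t : ℂ) • (X * X) + ((1 - t : ℝ) : ℂ) • (Y * Y) := by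
    rw [hZZ]
    abel
  have hgap : ((t * eigDesc hA.isHermitian 0 + (1 - t) * eigDesc hB.isHermitian 0 : ℝ) : ℂ) • 1
        - pswap t A B
      = (t : ℂ) • (X - X * X) + ((1 - t : ℝ) : ℂ) • (Y - Y * Y) + Z * Zᴴ := by
    rw [pswap, hcomm, hX, hY]
    match_scalars <;> ring
  refine ⟨hcomm, hgap, hgap ▸ .add (.add ?_ ?_) (posSemidef_self_mul_conjTranspose Z)⟩
  · exact (hX0.sub_mul_self (hX ▸ posSemidef_one_sub_eigDesc_zero_smul_one_sub hA hA1)).smul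
      (Complex.zero_le_real.mpr ht0.le)
  · exact (hY0.sub_mul_self (hY ▸ posSemidef_one_sub_eigDesc_zero_smul_one_sub hB hB1)).smul
      (Complex.zero_le_real.mpr (by linarith))
end

section
/- For density matrices ρ, σ on an n-dimensional Hilbert space and t ∈ (0,1), the eigenvalue sequence of ρ ⋆_t σ = t·ρ + (1−t)·σ + i·√(t(1−t))·[ρ,σ] is majorized by the sequence (t·λ_j(ρ) + (1−t)·λ_j(σ))_j; that is, for every k, Σ_{j=1}^k λ_j(ρ ⋆_t σ) ≤ Σ_{j=1}^k (t·λ_j(ρ) + (1−t)·λ_j(σ)). -/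
open Matrix ComplexOrder

/-!
Let `P` be the spectral projection of `C = ρ ⋆_t σ` onto its top `k` eigenvectors, so that the
sum of the `k` largest eigenvalues of `C` is `Re tr (P C)`. With `X = (1 - P) ρ P` and
`Y = (1 - P) σ P` one has `tr (P [ρ, σ]) = tr (Xᴴ Y - Yᴴ X)`, and expanding
`tr (Zᴴ Z) ≥ 0` for `Z = √t X - i √(1-t) Y` gives
`Re tr (P C) ≤ t (tr (P ρ) + tr (Xᴴ X)) + (1 - t) (tr (P σ) + tr (Yᴴ Y))`.
Since `0 ≤ ρ ≤ 1`, `tr (P ρ) + tr (Xᴴ X) ≤ tr (P' ρ)` for the projection `P'` onto the graph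
`{u + X u | u ∈ range P}`, which has the rank of `P`; by Ky Fan's maximum principle,
`tr (P' ρ)` is at most the sum of the `k` largest eigenvalues of `ρ`.
-/

open Finset

namespace Matrix

variable {m 𝕜 : Type*} [Fintype m] [RCLike 𝕜]

lemma _root_.IsStarProjection.posSemidef {P : Matrix m m 𝕜} (hP : IsStarProjection P) :
    P.PosSemidef := by
  have h := posSemidef_conjTranspose_mul_self P
  rwa [← star_eq_conjTranspose, hP.isSelfAdjoint.star_eq, hP.isIdempotentElem.eq] at h

variable [DecidableEq m]

lemma trace_conjStarAlgAut (U : unitary (Matrix m m 𝕜)) (X : Matrix m m 𝕜) :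
    (Unitary.conjStarAlgAut 𝕜 _ U X).trace = X.trace := by
  rw [Unitary.conjStarAlgAut_apply, trace_mul_cycle, Unitary.coe_star_mul_self, one_mul]

lemma PosSemidef.trace_mul_nonneg {A B : Matrix m m 𝕜} (hA : A.PosSemidef) (hB : B.PosSemidef) :
    0 ≤ (A * B).trace := by
  open scoped MatrixOrder in
  obtain ⟨C, rfl⟩ := CStarAlgebra.nonneg_iff_eq_star_mul_self.mp hA.nonneg
  rw [star_eq_conjTranspose, Matrix.mul_assoc, trace_mul_comm]
  exact (hB.mul_mul_conjTranspose_same C).trace_nonneg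

lemma PosSemidef.sub_mul_self_s9 {A : Matrix m m 𝕜} (hA : A.PosSemidef) (hA1 : (1 - A).PosSemidef) :
    (A - A * A).PosSemidef := by
  have key : A - A * A = (1 - A)ᴴ * A * (1 - A) + Aᴴ * (1 - A) * A := by
    rw [hA1.isHermitian.eq, hA.isHermitian.eq]; noncomm_ring
  rw [key]
  exact (hA.conjTranspose_mul_mul_same _).add (hA1.conjTranspose_mul_mul_same _)

lemma PosSemidef.one_sub_of_trace_le_one {A : Matrix m m 𝕜} (hA : A.PosSemidef)
    (h : A.trace ≤ 1) : (1 - A).PosSemidef := by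
  have hsum : ∑ i, hA.isHermitian.eigenvalues i ≤ 1 := by
    have := (RCLike.le_iff_re_im.mp h).1
    simpa [hA.isHermitian.trace_eq_sum_eigenvalues] using this
  have hdiag : (diagonal (RCLike.ofReal ∘ (1 - hA.isHermitian.eigenvalues)) :
      Matrix m m 𝕜).PosSemidef := by
    refine PosSemidef.diagonal fun i => ?_
    have := single_le_sum (fun j _ => hA.eigenvalues_nonneg j) (mem_univ i) |>.trans hsum
    exact RCLike.ofReal_nonneg.mpr (by simpa using this)
  have := hdiag.mul_mul_conjTranspose_same (hA.isHermitian.eigenvectorUnitary : Matrix m m 𝕜)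
  convert this using 1
  conv_lhs => rw [hA.isHermitian.spectral_theorem]
  rw [← map_one (Unitary.conjStarAlgAut 𝕜 _ _), ← map_sub, Unitary.conjStarAlgAut_apply,
    star_eq_conjTranspose, ← diagonal_one, diagonal_sub]
  congr 3
  funext i
  simp

lemma posSemidef_one_sub_compression_sub {A P : Matrix m m 𝕜} (hA : A.PosSemidef)
    (hA1 : (1 - A).PosSemidef) (hP : IsStarProjection P) :
    (1 - P * A * P - ((1 - P) * A * P)ᴴ * ((1 - P) * A * P)).PosSemidef := by
  have hPP : P * P = P := hP.isIdempotentElem.eq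
  have hPH : Pᴴ = P := hP.isSelfAdjoint.star_eq
  have key : 1 - P * A * P - ((1 - P) * A * P)ᴴ * ((1 - P) * A * P)
      = (1 - P * A * P)ᴴ * (1 - P * A * P) + Pᴴ * (A - A * A) * P := by
    have hPP' : ∀ X : Matrix m m 𝕜, X * P * P = X * P := fun X => by rw [mul_assoc, hPP]
    simp only [conjTranspose_mul, conjTranspose_sub, conjTranspose_one, hPH, hA.isHermitian.eq,
      mul_sub, sub_mul, mul_one, one_mul, ← mul_assoc, hPP']
    abel
  rw [key]
  exact (posSemidef_conjTranspose_mul_self _).add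
    ((hA.sub_mul_self_s9 hA1).conjTranspose_mul_mul_same P)

section InvOneAdd

variable {M : Matrix m m 𝕜} (hM : M.PosSemidef)
include hM

lemma PosSemidef.isUnit_det_one_add : IsUnit (1 + M).det :=
  (isUnit_iff_isUnit_det _).mp (PosDef.one.add_posSemidef hM).isUnit

lemma PosSemidef.inv_one_add : (1 + M)⁻¹.PosSemidef :=
  (PosDef.one.add_posSemidef hM).inv.posSemidef

lemma PosSemidef.inv_one_add_mul_one_add : (1 + M)⁻¹ * (1 + M) = 1 :=
  nonsing_inv_mul _ hM.isUnit_det_one_add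

lemma PosSemidef.inv_one_add_mul_self : ((1 + M)⁻¹ * M).PosSemidef := by
  set L := (1 + M)⁻¹
  have key : L * M = Lᴴ * M * L + (L * M) * (L * M)ᴴ := by
    rw [conjTranspose_mul, hM.inv_one_add.isHermitian.eq, hM.isHermitian.eq]
    calc L * M = L * M * ((1 + M) * L) := by
          rw [mul_nonsing_inv _ hM.isUnit_det_one_add, mul_one]
      _ = L * M * L + L * M * (M * L) := by noncomm_ring
  rw [key]
  exact (hM.conjTranspose_mul_mul_same L).add (posSemidef_self_mul_conjTranspose _)

end InvOneAdd

/-- The orthogonal projection onto the graph `{u + X u | u ∈ range P}`. -/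
noncomputable def graphProj (P X : Matrix m m 𝕜) : Matrix m m 𝕜 :=
  (P + X) * (1 + Xᴴ * X)⁻¹ * (P + X)ᴴ

section graphProj

variable {P X : Matrix m m 𝕜} (hP : IsStarProjection P) (hPX : P * X = 0) (hXP : X * P = X)
include hP hPX hXP

lemma inv_one_add_conjTranspose_mul_self_mul_graph :
    (1 + Xᴴ * X)⁻¹ * ((P + X)ᴴ * (P + X)) = P := by
  have hM := posSemidef_conjTranspose_mul_self X
  have hPP : P * P = P := hP.isIdempotentElem.eq
  have hPH : Pᴴ = P := hP.isSelfAdjoint.star_eq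
  have hXHP : Xᴴ * P = 0 := by rw [← hPH, ← conjTranspose_mul, hPX, conjTranspose_zero]
  have hsum : (P + X)ᴴ * (P + X) = (1 + Xᴴ * X) - (1 - P) := by
    rw [conjTranspose_add, hPH, add_mul, mul_add, mul_add, hPP, hPX, hXHP]; abel
  have hMQ : (1 + Xᴴ * X) * (1 - P) = 1 - P := by
    rw [add_mul, one_mul, mul_assoc, mul_sub, mul_one, hXP, sub_self, mul_zero, add_zero]
  have hLQ : (1 + Xᴴ * X)⁻¹ * (1 - P) = 1 - P := by
    rw [← hMQ, ← mul_assoc, hM.inv_one_add_mul_one_add, one_mul, hMQ]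
  rw [hsum, mul_sub, hM.inv_one_add_mul_one_add, hLQ, sub_sub_cancel]

lemma isStarProjection_graphProj : IsStarProjection (graphProj P X) := by
  refine ⟨?_, ((posSemidef_conjTranspose_mul_self X).inv_one_add.mul_mul_conjTranspose_same
    (P + X)).isHermitian⟩
  have hTP : (P + X) * P = P + X := by rw [add_mul, hP.isIdempotentElem.eq, hXP]
  calc graphProj P X * graphProj P X
      = (P + X) * ((1 + Xᴴ * X)⁻¹ * ((P + X)ᴴ * (P + X))) * (1 + Xᴴ * X)⁻¹ * (P + X)ᴴ := by
        simp only [graphProj, mul_assoc]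
    _ = graphProj P X := by
        rw [inv_one_add_conjTranspose_mul_self_mul_graph hP hPX hXP, hTP, graphProj]

lemma trace_graphProj : (graphProj P X).trace = P.trace := by
  rw [graphProj, trace_mul_comm, ← mul_assoc, trace_mul_comm,
    inv_one_add_conjTranspose_mul_self_mul_graph hP hPX hXP]

end graphProj

lemma trace_mul_add_le_trace_graphProj_mul {A P : Matrix m m 𝕜} (hA : A.PosSemidef)
    (hA1 : (1 - A).PosSemidef) (hP : IsStarProjection P) :
    (P * A).trace + (((1 - P) * A * P)ᴴ * ((1 - P) * A * P)).trace ≤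
      (graphProj P ((1 - P) * A * P) * A).trace := by
  set Q := 1 - P
  set X := Q * A * P
  set M := Xᴴ * X
  set L := (1 + M)⁻¹
  set B := P * A * P
  set R := Xᴴ * A * X
  have hM : M.PosSemidef := posSemidef_conjTranspose_mul_self X
  have hPH : Pᴴ = P := hP.isSelfAdjoint.star_eq
  have hXH : Xᴴ = P * A * Q := by
    simp [X, Q, conjTranspose_mul, hPH, hA.isHermitian.eq, mul_assoc]
  have hQQ : Q * Q = Q := hP.isIdempotentElem.one_sub.eq
  have hTAT : (P + X)ᴴ * A * (P + X) = B + M + M + R := by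
    have hPAX : P * A * X = M := by
      rw [show M = Xᴴ * X from rfl, hXH]; simp only [X, mul_assoc]; rw [← mul_assoc Q Q, hQQ]
    have hXAP : Xᴴ * A * P = M := by
      rw [show M = Xᴴ * X from rfl, hXH]; simp only [X, mul_assoc]; rw [← mul_assoc Q Q, hQQ]
    simp only [conjTranspose_add, hPH, add_mul, mul_add, hPAX, hXAP]
    abel
  have hsplit : L * (B + M + M + R) = B + M + L * R + L * M * (1 - B - M) := by
    calc L * (B + M + M + R) = L * ((1 + M) * (B + M)) + L * R + L * M * (1 - B - M) := by
          noncomm_ring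
      _ = _ := by rw [← mul_assoc, hM.inv_one_add_mul_one_add, one_mul]
  have hBtr : B.trace = (P * A).trace := by
    rw [trace_mul_comm, ← mul_assoc, hP.isIdempotentElem.eq]
  have hcyc : (graphProj P X * A).trace = (L * ((P + X)ᴴ * A * (P + X))).trace := by
    rw [graphProj, mul_assoc, mul_assoc, trace_mul_comm]; simp only [mul_assoc]; rfl
  have hLR : 0 ≤ (L * R).trace :=
    hM.inv_one_add.trace_mul_nonneg (hA.conjTranspose_mul_mul_same X)
  have hLMN : 0 ≤ (L * M * (1 - B - M)).trace :=
    hM.inv_one_add_mul_self.trace_mul_nonneg (posSemidef_one_sub_compression_sub hA hA1 hP)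
  rw [hcyc, hTAT, hsplit]
  simp only [trace_add, hBtr, add_assoc]
  exact add_le_add_right (le_add_of_nonneg_right (add_nonneg hLR hLMN)) _

lemma trace_conjTranspose_mul_offDiag {A B P : Matrix m m 𝕜} (hA : A.IsHermitian)
    (hP : IsStarProjection P) :
    (((1 - P) * A * P)ᴴ * ((1 - P) * B * P)).trace = (P * A * B).trace - (P * A * P * B).trace := by
  have hPH : Pᴴ = P := hP.isSelfAdjoint.star_eq
  calc (((1 - P) * A * P)ᴴ * ((1 - P) * B * P)).trace
      = (P * A * ((1 - P) * (1 - P)) * B * P).trace := by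
        simp only [conjTranspose_mul, conjTranspose_sub, conjTranspose_one, hPH, hA.eq, mul_assoc]
    _ = ((P * P) * A * (1 - P) * B).trace := by
        rw [hP.isIdempotentElem.one_sub.eq, trace_mul_comm]; simp only [mul_assoc]
    _ = (P * A * B).trace - (P * A * P * B).trace := by
        rw [hP.isIdempotentElem.eq]
        simp only [mul_sub, sub_mul, mul_one, trace_sub]

lemma trace_mul_commutator_eq {A B P : Matrix m m 𝕜} (hA : A.IsHermitian) (hB : B.IsHermitian)
    (hP : IsStarProjection P) :
    (P * (A * B - B * A)).trace =
      (((1 - P) * A * P)ᴴ * ((1 - P) * B * P) -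
        ((1 - P) * B * P)ᴴ * ((1 - P) * A * P)).trace := by
  rw [trace_sub, trace_conjTranspose_mul_offDiag hA hP, trace_conjTranspose_mul_offDiag hB hP,
    mul_sub, trace_sub, ← mul_assoc, ← mul_assoc, mul_assoc (P * A),
    trace_mul_comm (P * A) (P * B), ← mul_assoc]
  abel

end Matrix

variable {n : ℕ}

lemma sum_mul_le_sum_filter_lt {k : ℕ} {c d : Fin n → ℝ} (π : Equiv.Perm (Fin n))
    (hd : Antitone (d ∘ π)) (hc0 : ∀ i, 0 ≤ c i) (hc1 : ∀ i, c i ≤ 1)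
    (hc : ∑ i, c i = #(univ.filter fun j : Fin n => (j : ℕ) < k)) :
    ∑ i, c i * d i ≤ ∑ j ∈ univ.filter (fun j : Fin n => (j : ℕ) < k), d (π j) := by
  obtain _ | n := n
  · simp
  set F := univ.filter fun j : Fin (n + 1) => (j : ℕ) < k
  -- `s` separates the values `d (π j)` with `j < k` from the others.
  set s := d (π ⟨min k (n + 1) - 1, by omega⟩)
  have hpoint : ∀ j, c (π j) * (d (π j) - s) ≤ if (j : ℕ) < k then d (π j) - s else 0 := by
    intro j
    split_ifs with hj
    · have : s ≤ d (π j) := hd (Fin.le_def.mpr (by simp; omega))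
      nlinarith [hc1 (π j)]
    · have : d (π j) ≤ s := hd (Fin.le_def.mpr (by simp; omega))
      nlinarith [hc0 (π j)]
  have hlhs : ∑ j, c (π j) * (d (π j) - s) = ∑ i, c i * d i - s * #F := by
    rw [← hc, mul_sum, ← sum_sub_distrib]
    exact Equiv.sum_comp π (fun i => c i * (d i - s)) |>.trans (sum_congr rfl fun i _ => by ring)
  have hrhs : ∑ j : Fin (n + 1), (if (j : ℕ) < k then d (π j) - s else 0) =
      ∑ j ∈ F, d (π j) - s * #F := by
    rw [← sum_filter, sum_sub_distrib, sum_const, nsmul_eq_mul, mul_comm]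
  linarith [sum_le_sum fun j (_ : j ∈ univ) => hpoint j]

noncomputable def sortDesc (d : Fin n → ℝ) : Equiv.Perm (Fin n) :=
  Fin.revPerm.trans (Tuple.sort d)

lemma antitone_comp_sortDesc (d : Fin n → ℝ) : Antitone (d ∘ sortDesc d) :=
  fun _ _ hab => Tuple.monotone_sort d (Fin.rev_le_rev.mpr hab)

lemma eigDesc_eq_comp_sortDesc {A : Matrix (Fin n) (Fin n) ℂ} (hA : A.IsHermitian) :
    eigDesc hA = hA.eigenvalues ∘ sortDesc hA.eigenvalues :=
  rfl

lemma re_trace_mul_le_sum_eigDesc {k : ℕ} {A W : Matrix (Fin n) (Fin n) ℂ} (hA : A.IsHermitian)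
    (hW : W.PosSemidef) (hW1 : (1 - W).PosSemidef)
    (htr : W.trace = #(univ.filter fun j : Fin n => (j : ℕ) < k)) :
    (W * A).trace.re ≤ ∑ j ∈ univ.filter (fun j : Fin n => (j : ℕ) < k), eigDesc hA j := by
  set U : Matrix (Fin n) (Fin n) ℂ := ↑hA.eigenvectorUnitary
  have hUU : star U * U = 1 := Unitary.coe_star_mul_self _
  set D : Matrix (Fin n) (Fin n) ℂ := diagonal (RCLike.ofReal ∘ hA.eigenvalues)
  have hAU : A = U * D * star U := hA.spectral_theorem
  set B := Uᴴ * W * U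
  have hB : B.PosSemidef := hW.conjTranspose_mul_mul_same U
  have hB1 : (1 - B).PosSemidef := by
    simpa [B, mul_sub, sub_mul, ← star_eq_conjTranspose, hUU] using
      hW1.conjTranspose_mul_mul_same U
  have htrB : (W * A).trace = ∑ i, B i i * hA.eigenvalues i := by
    calc (W * A).trace = (B * D).trace := by
          conv_lhs => rw [hAU]
          rw [← mul_assoc, trace_mul_comm, star_eq_conjTranspose]; simp only [B, mul_assoc]
      _ = ∑ i, B i i * hA.eigenvalues i := by simp [trace, D, mul_diagonal]
  rw [htrB, Complex.re_sum, eigDesc_eq_comp_sortDesc]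
  simp only [Function.comp_apply, Complex.re_mul_ofReal]
  refine sum_mul_le_sum_filter_lt _ (antitone_comp_sortDesc _) (fun i => ?_) (fun i => ?_) ?_
  · simpa using (Complex.le_def.mp (hB.diag_nonneg (i := i))).1
  · simpa using (Complex.le_def.mp (hB1.diag_nonneg (i := i))).1
  · have hUU' : U * star U = 1 := Unitary.coe_mul_star_self _
    rw [← Complex.re_sum]
    change B.trace.re = _
    rw [trace_mul_comm, ← mul_assoc, ← star_eq_conjTranspose, hUU',
      one_mul, htr, Complex.natCast_re]

lemma exists_isStarProjection_re_trace_mul_eq_sum_eigDesc {A : Matrix (Fin n) (Fin n) ℂ}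
    (hA : A.IsHermitian) (k : ℕ) :
    ∃ P : Matrix (Fin n) (Fin n) ℂ, IsStarProjection P ∧
      P.trace = #(univ.filter fun j : Fin n => (j : ℕ) < k) ∧
      (P * A).trace.re = ∑ j ∈ univ.filter (fun j : Fin n => (j : ℕ) < k), eigDesc hA j := by
  set χ : Fin n → ℂ := fun i =>
    if (((sortDesc hA.eigenvalues).symm i : Fin n) : ℕ) < k then 1 else 0
  set conj := Unitary.conjStarAlgAut ℂ (Matrix (Fin n) (Fin n) ℂ) hA.eigenvectorUnitary
  have hχ : IsStarProjection (diagonal χ) := by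
    refine ⟨?_, ?_⟩
    · rw [IsIdempotentElem, diagonal_mul_diagonal]
      congr 1; funext i; simp [χ]
    · rw [IsSelfAdjoint, star_eq_conjTranspose, diagonal_conjTranspose]
      congr 1; funext i; simp [χ]
  refine ⟨conj (diagonal χ), hχ.map conj, ?_, ?_⟩
  · rw [Matrix.trace_conjStarAlgAut, trace_diagonal, ← Equiv.sum_comp (sortDesc hA.eigenvalues)]
    simp [χ, Finset.sum_boole]
  · conv_lhs => rw [hA.spectral_theorem]
    rw [← map_mul, Matrix.trace_conjStarAlgAut, diagonal_mul_diagonal, trace_diagonal,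
      Complex.re_sum, ← Equiv.sum_comp (sortDesc hA.eigenvalues), eigDesc_eq_comp_sortDesc,
      sum_filter]
    refine sum_congr rfl fun j _ => ?_
    split_ifs <;> simp [χ, *]

lemma re_trace_mul_add_le_sum_eigDesc {k : ℕ} {ρ P : Matrix (Fin n) (Fin n) ℂ}
    (hρ : ρ.PosSemidef) (hρ1 : (1 - ρ).PosSemidef) (hP : IsStarProjection P)
    (htr : P.trace = #(univ.filter fun j : Fin n => (j : ℕ) < k)) :
    ((P * ρ).trace + (((1 - P) * ρ * P)ᴴ * ((1 - P) * ρ * P)).trace).re ≤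
      ∑ j ∈ univ.filter (fun j : Fin n => (j : ℕ) < k), eigDesc hρ.isHermitian j := by
  have hPX : P * ((1 - P) * ρ * P) = 0 := by
    rw [← mul_assoc, ← mul_assoc, mul_sub, mul_one, hP.isIdempotentElem.eq, sub_self, zero_mul,
      zero_mul]
  have hXP : (1 - P) * ρ * P * P = (1 - P) * ρ * P := by rw [mul_assoc, hP.isIdempotentElem.eq]
  have hP' := isStarProjection_graphProj hP hPX hXP
  exact (Complex.le_def.mp (trace_mul_add_le_trace_graphProj_mul hρ hρ1 hP)).1.trans
    (re_trace_mul_le_sum_eigDesc hρ.isHermitian hP'.posSemidef hP'.one_sub.posSemidef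
      ((trace_graphProj hP hPX hXP).trans htr))

lemma re_trace_mul_pswap_le {t : ℝ} (ht0 : 0 ≤ t) (ht1 : t ≤ 1)
    {ρ σ P : Matrix (Fin n) (Fin n) ℂ} (hρ : ρ.IsHermitian) (hσ : σ.IsHermitian)
    (hP : IsStarProjection P) :
    (P * pswap t ρ σ).trace.re ≤
      t * ((P * ρ).trace + (((1 - P) * ρ * P)ᴴ * ((1 - P) * ρ * P)).trace).re +
        (1 - t) * ((P * σ).trace + (((1 - P) * σ * P)ᴴ * ((1 - P) * σ * P)).trace).re := by
  set X := (1 - P) * ρ * P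
  set Y := (1 - P) * σ * P
  set a : ℂ := ((√t : ℝ) : ℂ)
  set b : ℂ := ((√(1 - t) : ℝ) : ℂ)
  have ha : a * a = t := by simp only [a, ← Complex.ofReal_mul, Real.mul_self_sqrt ht0]
  have hb : b * b = (1 - t : ℝ) := by
    simp only [b, ← Complex.ofReal_mul, Real.mul_self_sqrt (sub_nonneg.mpr ht1)]
  have hab : ((√(t * (1 - t)) : ℝ) : ℂ) = a * b := by
    simp only [a, b, ← Complex.ofReal_mul, Real.sqrt_mul ht0]
  -- `Z` is chosen so that the cross terms of `Zᴴ * Z` cancel those of `pswap`.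
  set Z := a • X - (Complex.I * b) • Y
  have hZ : (Zᴴ * Z).trace = a * a * (Xᴴ * X).trace + b * b * (Yᴴ * Y).trace
      - Complex.I * (a * b) * (Xᴴ * Y - Yᴴ * X).trace := by
    simp only [Z, conjTranspose_sub, conjTranspose_smul, sub_mul, mul_sub, smul_mul_smul,
      trace_sub, trace_smul, smul_eq_mul]
    have hstar : ∀ r : ℝ, star (r : ℂ) = r := Complex.conj_ofReal
    simp only [star_mul', hstar, a, b, Complex.star_def, Complex.conj_I]
    linear_combination (-(b * b) * (Yᴴ * Y).trace) * Complex.I_sq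
  have hC : (P * pswap t ρ σ).trace = t * (P * ρ).trace + (1 - t : ℝ) * (P * σ).trace
      + Complex.I * (a * b) * (P * (ρ * σ - σ * ρ)).trace := by
    simp only [pswap, mul_add, Matrix.mul_smul, trace_add, trace_smul, smul_eq_mul, hab]
  have hsum : (P * pswap t ρ σ).trace + (Zᴴ * Z).trace =
      t * ((P * ρ).trace + (Xᴴ * X).trace) + (1 - t : ℝ) * ((P * σ).trace + (Yᴴ * Y).trace) := by
    rw [hZ, hC, trace_mul_commutator_eq hρ hσ hP, ha, hb]; ring
  have hZ0 : 0 ≤ (Zᴴ * Z).trace.re :=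
    (Complex.le_def.mp (posSemidef_conjTranspose_mul_self Z).trace_nonneg).1
  have := congrArg Complex.re hsum
  simp only [Complex.add_re, Complex.re_ofReal_mul] at this ⊢
  linarith

theorem stmt_9 {n : ℕ} (t : ℝ) (ht : t ∈ Set.Ioo (0 : ℝ) 1)
    (ρ σ : Matrix (Fin n) (Fin n) ℂ)
    (hρ : ρ.PosSemidef) (hσ : σ.PosSemidef)
    (hρ1 : ρ.trace = 1) (hσ1 : σ.trace = 1)
    (hC : (pswap t ρ σ).IsHermitian) :
    ∀ k : ℕ,
      ∑ j ∈ Finset.univ.filter (fun j : Fin n => (j : ℕ) < k), eigDesc hC j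
        ≤ ∑ j ∈ Finset.univ.filter (fun j : Fin n => (j : ℕ) < k),
            (t * eigDesc hρ.isHermitian j + (1 - t) * eigDesc hσ.isHermitian j) := by
  intro k
  obtain ⟨ht0, ht1⟩ := ht
  obtain ⟨P, hP, htr, hPC⟩ := exists_isStarProjection_re_trace_mul_eq_sum_eigDesc hC k
  have hρk := re_trace_mul_add_le_sum_eigDesc hρ (hρ.one_sub_of_trace_le_one hρ1.le) hP htr
  have hσk := re_trace_mul_add_le_sum_eigDesc hσ (hσ.one_sub_of_trace_le_one hσ1.le) hP htr
  have hcross := re_trace_mul_pswap_le ht0.le ht1.le hρ.isHermitian hσ.isHermitian hP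
  rw [sum_add_distrib, ← mul_sum, ← mul_sum, ← hPC]
  nlinarith [mul_le_mul_of_nonneg_left hρk ht0.le,
    mul_le_mul_of_nonneg_left hσk (sub_nonneg.mpr ht1.le)]
end

section
/- If (κ_j) and (λ_j) are non-negative non-increasing probability vectors in ℝ^n with (κ_j) majorized by (λ_j), and −Σ_j κ_j log κ_j = −Σ_j λ_j log λ_j (both finite), then κ_j = λ_j for all j. -/
lemma aux_tangent_14 (x y : ℝ) (hx : 0 ≤ x) (hy : 0 < y) :
    0 ≤ Real.negMulLog y - Real.negMulLog x - (-1 - Real.log y) * (y - x) ∧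
    (Real.negMulLog y - Real.negMulLog x - (-1 - Real.log y) * (y - x) = 0 → x = y) := by
  have key : Real.negMulLog y - Real.negMulLog x - (-1 - Real.log y) * (y - x)
      = x * Real.log x - x * Real.log y + y - x := by
    simp only [Real.negMulLog]; ring
  rcases eq_or_lt_of_le hx with hx0 | hx0
  · rw [key, ← hx0]
    simp only [zero_mul, sub_zero, zero_add, add_zero, sub_self]
    constructor
    · linarith
    · intro h; linarith
  · have hxy : 0 < y / x := div_pos hy hx0
    have key2 : x * Real.log x - x * Real.log y + y - x
        = x * ((y / x - 1) - Real.log (y / x)) := by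
      rw [Real.log_div hy.ne' hx0.ne']
      field_simp
      ring
    have hle := Real.log_le_sub_one_of_pos hxy
    rw [key, key2]
    constructor
    · have : 0 ≤ (y / x - 1) - Real.log (y / x) := by linarith
      positivity
    · intro h
      by_contra hne
      have h1 : y / x ≠ 1 := by
        intro h1
        exact hne ((div_eq_one_iff_eq hx0.ne').mp h1).symm
      have h2 := Real.log_lt_sub_one_of_pos hxy h1
      have h3 : 0 < x * ((y / x - 1) - Real.log (y / x)) := by
        apply mul_pos hx0; linarith
      linarith

lemma aux_part_14 {n : ℕ} (f : Fin n → ℝ) (F : ℕ → ℝ)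
    (hF : ∀ (i : ℕ) (h : i < n), F i = f ⟨i, h⟩) {k : ℕ} (hk : k ≤ n) :
    ∑ i ∈ Finset.univ.filter (fun i : Fin n => (i : ℕ) < k), f i
      = ∑ i ∈ Finset.range k, F i := by
  have h1 : ∑ i ∈ Finset.range k, F i
      = ∑ i ∈ Finset.range n, (if i < k then F i else 0) := by
    rw [← Finset.sum_filter]
    congr 1
    ext i
    simp only [Finset.mem_range, Finset.mem_filter]
    omega
  rw [h1, ← Fin.sum_univ_eq_sum_range (fun i => if i < k then F i else 0) n,
    Finset.sum_filter]
  refine Finset.sum_congr rfl fun i _ => ?_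
  by_cases h : (i : ℕ) < k <;> simp [h, hF i.1 i.2]

theorem stmt_14 {n : ℕ} (κ lam : Fin n → ℝ)
    (hκ0 : ∀ j, 0 ≤ κ j) (hlam0 : ∀ j, 0 ≤ lam j)
    (hκmono : Antitone κ) (hlammono : Antitone lam)
    (hκ1 : ∑ j, κ j = 1) (hlam1 : ∑ j, lam j = 1)
    (hmaj : ∀ k : ℕ,
      ∑ j ∈ Finset.univ.filter (fun j : Fin n => (j : ℕ) < k), κ j
        ≤ ∑ j ∈ Finset.univ.filter (fun j : Fin n => (j : ℕ) < k), lam j)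
    (hent : ∑ j, Real.negMulLog (κ j) = ∑ j, Real.negMulLog (lam j)) :
    κ = lam := by
  classical
  rcases Nat.eq_zero_or_pos n with hn | hn
  · subst hn; funext j; exact j.elim0
  -- Step 1: where κ vanishes, lam vanishes too
  have hzero : ∀ j : Fin n, κ j = 0 → lam j = 0 := by
    intro j hj
    have hk : ∑ i ∈ Finset.univ.filter (fun i : Fin n => (i : ℕ) < (j : ℕ)), κ i = 1 := by
      rw [← hκ1]
      apply Finset.sum_subset (Finset.filter_subset _ _)
      intro x _ hx
      simp only [Finset.mem_filter, Finset.mem_univ, true_and, not_lt] at hx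
      have h1 : κ x ≤ κ j := hκmono (by exact_mod_cast hx)
      linarith [hκ0 x]
    have h2 : ∑ i ∈ Finset.univ.filter (fun i : Fin n => (i : ℕ) < (j : ℕ)), lam i ≤ 1 := by
      rw [← hlam1]
      exact Finset.sum_le_sum_of_subset_of_nonneg (Finset.filter_subset _ _)
        (fun i _ _ => hlam0 i)
    have h3 := hmaj (j : ℕ)
    have hl1 : ∑ i ∈ Finset.univ.filter (fun i : Fin n => (i : ℕ) < (j : ℕ)), lam i = 1 := by
      rw [hk] at h3; linarith
    have hsplit := Finset.sum_filter_add_sum_filter_not Finset.univ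
      (fun i : Fin n => (i : ℕ) < (j : ℕ)) lam
    rw [hl1, hlam1] at hsplit
    have hcomp : ∑ i ∈ Finset.univ.filter (fun i : Fin n => ¬ (i : ℕ) < (j : ℕ)), lam i = 0 := by
      linarith
    have hj' : j ∈ Finset.univ.filter (fun i : Fin n => ¬ (i : ℕ) < (j : ℕ)) := by simp
    exact (Finset.sum_eq_zero_iff_of_nonneg (fun i _ => hlam0 i)).mp hcomp j hj'
  -- Step 2: extend to ℕ
  set K : ℕ → ℝ := fun i => if h : i < n then κ ⟨i, h⟩ else 0 with hKdef
  set L : ℕ → ℝ := fun i => if h : i < n then lam ⟨i, h⟩ else 0 with hLdef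
  have hKf : ∀ (i : ℕ) (h : i < n), K i = κ ⟨i, h⟩ := fun i h => dif_pos h
  have hLf : ∀ (i : ℕ) (h : i < n), L i = lam ⟨i, h⟩ := fun i h => dif_pos h
  have hK0 : ∀ i, 0 ≤ K i := by
    intro i; by_cases h : i < n
    · rw [hKf i h]; exact hκ0 _
    · simp [hKdef, h]
  have hL0 : ∀ i, 0 ≤ L i := by
    intro i; by_cases h : i < n
    · rw [hLf i h]; exact hlam0 _
    · simp [hLdef, h]
  have hKanti : ∀ a b : ℕ, a ≤ b → K b ≤ K a := by
    intro a b hab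
    by_cases hb : b < n
    · have ha : a < n := lt_of_le_of_lt hab hb
      rw [hKf a ha, hKf b hb]
      exact hκmono hab
    · have : K b = 0 := by simp [hKdef, hb]
      rw [this]; exact hK0 a
  have hKsum : ∑ i ∈ Finset.range n, K i = 1 := by
    rw [← Fin.sum_univ_eq_sum_range, ← hκ1]
    exact Finset.sum_congr rfl fun i _ => by simp [hKf i.1 i.2]
  have hLsum : ∑ i ∈ Finset.range n, L i = 1 := by
    rw [← Fin.sum_univ_eq_sum_range, ← hlam1]
    exact Finset.sum_congr rfl fun i _ => by simp [hLf i.1 i.2]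
  have hmaj' : ∀ k, k ≤ n → ∑ i ∈ Finset.range k, K i ≤ ∑ i ∈ Finset.range k, L i := by
    intro k hk
    rw [← aux_part_14 κ K hKf hk, ← aux_part_14 lam L hLf hk]
    exact hmaj k
  set d : ℕ → ℝ := fun i => K i - L i with hddef
  have hDle : ∀ k, k ≤ n → ∑ i ∈ Finset.range k, d i ≤ 0 := by
    intro k hk
    have := hmaj' k hk
    simp only [hddef, Finset.sum_sub_distrib]
    linarith
  have hDn : ∑ i ∈ Finset.range n, d i = 0 := by
    simp only [hddef, Finset.sum_sub_distrib, hKsum, hLsum, sub_self]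
  -- Step 3: choose ε = minimal positive value of K
  set P : Finset ℕ := (Finset.range n).filter (fun i => 0 < K i) with hPdef
  have hK0pos : 0 < K 0 := by
    rw [hKf 0 hn]
    by_contra h
    push_neg at h
    have hall : ∀ j : Fin n, κ j = 0 := by
      intro j
      have h1 : κ j ≤ κ ⟨0, hn⟩ := hκmono (Fin.mk_le_mk.mpr (Nat.zero_le _))
      linarith [hκ0 j]
    have : (1 : ℝ) = 0 := by
      rw [← hκ1]; exact Finset.sum_eq_zero fun j _ => hall j
    norm_num at this
  have hP : P.Nonempty := ⟨0, by simp [hPdef, hn, hK0pos]⟩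
  set ε : ℝ := P.inf' hP K with hεdef
  have hεpos : 0 < ε := by
    rw [hεdef, Finset.lt_inf'_iff]
    intro b hb
    exact (Finset.mem_filter.mp hb).2
  have hεle : ∀ i, 0 < K i → ε ≤ K i := by
    intro i hi
    have hin : i < n := by
      by_contra h
      have : K i = 0 := by simp [hKdef, h]
      rw [this] at hi; exact lt_irrefl 0 hi
    exact Finset.inf'_le K (by simp [hPdef, hin, hi])
  -- Step 4: the tangent slopes
  set c : ℕ → ℝ := fun i => -1 - Real.log (K i ⊔ ε) with hcdef
  have hcmono : ∀ a b : ℕ, a ≤ b → c a ≤ c b := by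
    intro a b hab
    have h1 : K b ⊔ ε ≤ K a ⊔ ε := sup_le_sup_right (hKanti a b hab) ε
    have h2 : Real.log (K b ⊔ ε) ≤ Real.log (K a ⊔ ε) :=
      Real.log_le_log (lt_of_lt_of_le hεpos le_sup_right) h1
    simp only [hcdef]
    linarith
  -- Step 5: Abel summation
  have habel : 0 ≤ ∑ i ∈ Finset.range n, c i * d i := by
    have h := Finset.sum_range_by_parts c d n
    simp only [smul_eq_mul] at h
    rw [h, hDn, mul_zero, zero_sub, neg_nonneg]
    apply Finset.sum_nonpos
    intro i hi
    have hi' : i + 1 ≤ n := by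
      simp only [Finset.mem_range] at hi; omega
    have h1 : 0 ≤ c (i + 1) - c i := sub_nonneg.mpr (hcmono i (i + 1) (Nat.le_succ i))
    have h2 : ∑ j ∈ Finset.range (i + 1), d j ≤ 0 := hDle (i + 1) hi'
    exact mul_nonpos_of_nonneg_of_nonpos h1 h2
  -- Step 6: pointwise terms
  set φ : ℕ → ℝ := fun i => Real.negMulLog (K i) - Real.negMulLog (L i) - c i * d i with hφdef
  have hφ : ∀ i < n, 0 ≤ φ i ∧ (φ i = 0 → K i = L i) := by
    intro i hin
    rcases eq_or_lt_of_le (hK0 i) with hKi | hKi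
    · have hLi : L i = 0 := by
        rw [hLf i hin]
        exact hzero ⟨i, hin⟩ ((hKf i hin).symm.trans hKi.symm)
      have : φ i = 0 := by
        simp [hφdef, hddef, ← hKi, hLi]
      constructor
      · rw [this]
      · intro _; rw [← hKi, hLi]
    · have hce : c i = -1 - Real.log (K i) := by
        simp only [hcdef]
        rw [sup_eq_left.mpr (hεle i hKi)]
      have := aux_tangent_14 (L i) (K i) (hL0 i) hKi
      rw [← hce] at this
      have hφe : φ i = Real.negMulLog (K i) - Real.negMulLog (L i) - c i * (K i - L i) := rfl
      constructor
      · rw [hφe]; exact this.1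
      · intro h; rw [hφe] at h; exact (this.2 h).symm
  have hφsum : ∑ i ∈ Finset.range n, φ i = - ∑ i ∈ Finset.range n, c i * d i := by
    have hKe : ∑ i ∈ Finset.range n, Real.negMulLog (K i) = ∑ j, Real.negMulLog (κ j) := by
      rw [← Fin.sum_univ_eq_sum_range]
      exact Finset.sum_congr rfl fun i _ => by simp [hKf i.1 i.2]
    have hLe : ∑ i ∈ Finset.range n, Real.negMulLog (L i) = ∑ j, Real.negMulLog (lam j) := by
      rw [← Fin.sum_univ_eq_sum_range]
      exact Finset.sum_congr rfl fun i _ => by simp [hLf i.1 i.2]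
    simp only [hφdef, Finset.sum_sub_distrib, hKe, hLe, hent]
    ring
  have hφzero : ∀ i ∈ Finset.range n, φ i = 0 := by
    have h1 : ∑ i ∈ Finset.range n, φ i ≤ 0 := by rw [hφsum]; linarith
    have h2 : ∑ i ∈ Finset.range n, φ i = 0 :=
      le_antisymm h1 (Finset.sum_nonneg fun i hi =>
        (hφ i (Finset.mem_range.mp hi)).1)
    exact (Finset.sum_eq_zero_iff_of_nonneg
      (fun i hi => (hφ i (Finset.mem_range.mp hi)).1)).mp h2
  funext j
  have := (hφ j j.isLt).2 (hφzero j (Finset.mem_range.mpr j.isLt))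
  rw [hKf j.1 j.isLt, hLf j.1 j.isLt] at this
  simpa using this
end

section
/- For t ∈ (0,1), density matrices ρ, σ, and the partial-swap convolution ρ ⋆_t σ = t·ρ + (1−t)·σ + i·√(t(1−t))·[ρ,σ], the operator ρ ⋆_t σ is a density matrix: it is self-adjoint, positive semidefinite, and has trace 1. -/
open Matrix ComplexOrder

/-
With `M = √t • ρ + i√(1-t) • σ` one has `MᴴM = tρ² + (1-t)σ² + i√(t(1-t))[ρ,σ]`, so
`ρ ⋆_t σ = t(ρ - ρ²) + (1-t)(σ - σ²) + MᴴM`. A state satisfies `ρ² ≤ ρ`, because its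
eigenvalues lie in `[0, Tr ρ] = [0, 1]`; hence all three summands are positive semidefinite.
-/

namespace Matrix
variable {n : Type*} [Fintype n] [DecidableEq n]

lemma PosSemidef.eigenvalues_le_re_trace {A : Matrix n n ℂ} (hA : A.PosSemidef) (i : n) :
    hA.1.eigenvalues i ≤ A.trace.re := by
  simp only [hA.1.trace_eq_sum_eigenvalues, Complex.re_sum]
  exact Finset.single_le_sum (fun j _ => hA.eigenvalues_nonneg j) (Finset.mem_univ i)

open scoped MatrixOrder in
lemma PosSemidef.re_trace_smul_sub_mul_self {A : Matrix n n ℂ} (hA : A.PosSemidef) :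
    (A.trace.re • A - A * A).PosSemidef := by
  rw [← nonneg_iff_posSemidef]
  have hcfc : cfc (fun x : ℝ => A.trace.re * x - x * x) A = A.trace.re • A - A * A := by
    rw [cfc_sub _ _ A, cfc_const_mul _ _ A, cfc_mul _ _ A, cfc_id' ℝ A]
  rw [← hcfc]
  refine cfc_nonneg fun x hx => ?_
  obtain ⟨i, rfl⟩ := hA.1.spectrum_real_eq_range_eigenvalues ▸ hx
  nlinarith [hA.eigenvalues_nonneg i, hA.eigenvalues_le_re_trace i]

end Matrix

lemma pswap_eq_add_conjTranspose_mul_self {n : ℕ} {t : ℝ} (ht0 : 0 ≤ t) (ht1 : t ≤ 1)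
    {A B : Matrix (Fin n) (Fin n) ℂ} (hA : A.IsHermitian) (hB : B.IsHermitian) :
    pswap t A B = (t : ℂ) • (A - A * A) + ((1 - t : ℝ) : ℂ) • (B - B * B)
      + ((√t : ℂ) • A + (Complex.I * (√(1 - t) : ℝ)) • B)ᴴ
        * ((√t : ℂ) • A + (Complex.I * (√(1 - t) : ℝ)) • B) := by
  have hsq : (√t : ℂ) * √t = t := by exact_mod_cast Real.mul_self_sqrt ht0
  have hsq' : ((√(1 - t) : ℝ) : ℂ) * (√(1 - t) : ℝ) = ((1 - t : ℝ) : ℂ) := by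
    exact_mod_cast Real.mul_self_sqrt (sub_nonneg.mpr ht1)
  have hmul : ((√(t * (1 - t)) : ℝ) : ℂ) = (√t : ℂ) * (√(1 - t) : ℝ) := by
    rw [Real.sqrt_mul ht0, Complex.ofReal_mul]
  simp only [pswap, conjTranspose_add, conjTranspose_smul, hA.eq, hB.eq, star_mul',
    Complex.star_def, Complex.conj_I, Complex.conj_ofReal, hmul]
  simp only [add_mul, mul_add, smul_mul_smul, smul_sub]
  rw [← hsq, ← hsq']
  linear_combination (norm := module)
    (((√(1 - t) : ℝ) : ℂ) * (√(1 - t) : ℝ)) • Complex.I_mul_I • (B * B)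

theorem stmt_15 {n : ℕ} (t : ℝ) (ht : t ∈ Set.Ioo (0 : ℝ) 1)
    (ρ σ : Matrix (Fin n) (Fin n) ℂ)
    (hρ : ρ.PosSemidef) (hσ : σ.PosSemidef)
    (hρ1 : ρ.trace = 1) (hσ1 : σ.trace = 1) :
    (pswap t ρ σ).IsHermitian ∧ (pswap t ρ σ).PosSemidef ∧ (pswap t ρ σ).trace = 1 := by
  have hpsd : (pswap t ρ σ).PosSemidef := by
    rw [pswap_eq_add_conjTranspose_mul_self ht.1.le ht.2.le hρ.1 hσ.1]
    have hρ2 := hρ.re_trace_smul_sub_mul_self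
    have hσ2 := hσ.re_trace_smul_sub_mul_self
    simp only [hρ1, hσ1, Complex.one_re, one_smul] at hρ2 hσ2
    refine ((hρ2.smul ?_).add (hσ2.smul ?_)).add (posSemidef_conjTranspose_mul_self _)
    all_goals exact_mod_cast (by linarith [ht.1, ht.2] : (0 : ℝ) ≤ _)
  refine ⟨hpsd.1, hpsd, ?_⟩
  simp only [pswap, trace_add, trace_smul, trace_sub, hρ1, hσ1, trace_mul_comm ρ σ, sub_self,
    smul_eq_mul, mul_one]
  push_cast
  ring
end

section
/- Let A, B be non-negative contractions, t ∈ (0,1), X = λ₁(A)𝟙 − A, Y = λ₁(B)𝟙 − B, Z = √t X + i√(1−t) Y. If φ satisfies Xφ = φ or Yφ = φ, then ‖Z*φ‖ ≥ √(t(1−t))·‖φ‖; consequently any vector φ in the null space of t(X−X²) + (1−t)(Y−Y²) + ZZ* satisfies Xφ = 0 and Yφ = 0, i.e., Aφ = λ₁(A)φ and Bφ = λ₁(B)φ. -/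
open Matrix ComplexOrder

/-- The Euclidean (ℓ²) norm of a vector in `ℂ^n`. -/
noncomputable def vecEnorm {n : ℕ} (v : Fin n → ℂ) : ℝ :=
  Real.sqrt (∑ i, ‖v i‖ ^ 2)

/-!
Since `A ≤ λ₁(A) ≤ 1`, the matrix `X = λ₁(A) - A` satisfies `0 ≤ X ≤ 1`, hence `X - X² ≥ 0`;
likewise for `Y`. If `Xφ = φ`, then `Z*φ = √t φ - i√(1-t) Yφ`, and the two summands are
orthogonal because `⟪φ, Yφ⟫` is real, so `‖Z*φ‖ ≥ √t ‖φ‖`; symmetrically if `Yφ = φ`.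
On the kernel of the sum of positive semidefinite terms, `ZZ*φ = 0`, hence `Z*φ = 0`, and then
`0 = ⟪φ, Z*φ⟫ = √t ⟪φ, Xφ⟫ - i√(1-t) ⟪φ, Yφ⟫` with both forms nonnegative forces
`Xφ = Yφ = 0`.
-/

namespace Matrix

variable {m 𝕜 : Type*} [RCLike 𝕜]

lemma PosSemidef.one_sub_smul_one_sub [DecidableEq m] {A : Matrix m m ℂ} (hA : A.PosSemidef)
    {c : ℝ} (hc : c ≤ 1) : (1 - ((c : ℂ) • 1 - A)).PosSemidef := by
  have h : 1 - ((c : ℂ) • 1 - A) = ((1 - c : ℝ) : ℂ) • 1 + A := by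
    push_cast
    module
  exact h ▸ (PosSemidef.one.smul (Complex.zero_le_real.mpr (sub_nonneg.mpr hc))).add hA

variable [Fintype m]

lemma IsHermitian.star_dotProduct_mulVec_self {M : Matrix m m 𝕜} (hM : M.IsHermitian)
    (φ : m → 𝕜) : star (star φ ⬝ᵥ M *ᵥ φ) = star φ ⬝ᵥ M *ᵥ φ := by
  rw [← star_dotProduct_star, star_star, star_mulVec, ← dotProduct_mulVec, hM.eq]

lemma PosSemidef.mulVec_eq_zero_of_add_mulVec_eq_zero {P Q : Matrix m m 𝕜}
    (hP : P.PosSemidef) (hQ : Q.PosSemidef) {φ : m → 𝕜} (h : (P + Q) *ᵥ φ = 0) :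
    P *ᵥ φ = 0 ∧ Q *ᵥ φ = 0 := by
  rw [← hP.dotProduct_mulVec_zero_iff, ← hQ.dotProduct_mulVec_zero_iff,
    ← add_eq_zero_iff_of_nonneg (hP.dotProduct_mulVec_nonneg φ) (hQ.dotProduct_mulVec_nonneg φ),
    ← dotProduct_add, ← add_mulVec, h, dotProduct_zero]

lemma PosSemidef.sub_mul_self_s16 [DecidableEq m] {X : Matrix m m 𝕜} (hX : X.PosSemidef)
    (hX1 : (1 - X).PosSemidef) : (X - X * X).PosSemidef := by
  open scoped MatrixOrder in
  obtain ⟨S, hS, rfl⟩ : ∃ S : Matrix m m 𝕜, S.IsHermitian ∧ S * S = X :=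
    ⟨CFC.sqrt X, (CFC.sqrt_nonneg X).posSemidef.isHermitian, CFC.sqrt_mul_sqrt_self X hX.nonneg⟩
  have h : S * (1 - S * S) * Sᴴ = S * S - S * S * (S * S) := by
    rw [hS.eq]
    noncomm_ring
  exact h ▸ hX1.mul_mul_conjTranspose_same S

lemma PosSemidef.mulVec_eq_zero_of_smul_sub_I_smul_mulVec_eq_zero {X Y : Matrix m m ℂ}
    (hX : X.PosSemidef) (hY : Y.PosSemidef) {s r : ℝ} (hs : s ≠ 0) (hr : r ≠ 0) {φ : m → ℂ}
    (h : ((s : ℂ) • X - (Complex.I * r) • Y) *ᵥ φ = 0) : X *ᵥ φ = 0 ∧ Y *ᵥ φ = 0 := by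
  obtain ⟨-, haim⟩ := Complex.nonneg_iff.mp (hX.dotProduct_mulVec_nonneg φ)
  obtain ⟨-, hbim⟩ := Complex.nonneg_iff.mp (hY.dotProduct_mulVec_nonneg φ)
  have hform := congrArg (star φ ⬝ᵥ ·) h
  simp only [sub_mulVec, smul_mulVec, dotProduct_sub, dotProduct_smul, smul_eq_mul,
    dotProduct_zero, Complex.ext_iff] at hform
  simp only [Complex.sub_re, Complex.mul_re, Complex.mul_im, Complex.sub_im, Complex.ofReal_re,
    Complex.ofReal_im, Complex.I_re, Complex.I_im, ← haim, ← hbim, Complex.zero_re,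
    Complex.zero_im] at hform
  rw [← hX.dotProduct_mulVec_zero_iff, ← hY.dotProduct_mulVec_zero_iff, Complex.ext_iff,
    Complex.ext_iff, ← haim, ← hbim]
  refine ⟨⟨?_, rfl⟩, ⟨?_, rfl⟩⟩
  · simpa [hs] using hform.1
  · simpa [hr] using hform.2

end Matrix

namespace Matrix.IsHermitian

variable {n : ℕ} {A : Matrix (Fin n) (Fin n) ℂ}

lemma eigenvalues_le_eigDesc_zero [NeZero n] (hA : A.IsHermitian) (i : Fin n) :
    hA.eigenvalues i ≤ eigDesc hA 0 := by
  have h : (Tuple.sort hA.eigenvalues).symm i ≤ Fin.rev 0 := by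
    rw [Fin.le_def, Fin.val_rev, Fin.val_zero]
    omega
  simpa [eigDesc] using Tuple.monotone_sort hA.eigenvalues h

open scoped MatrixOrder in
lemma posSemidef_eigDesc_zero_smul_one_sub [NeZero n] (hA : A.IsHermitian) :
    ((eigDesc hA 0 : ℂ) • 1 - A).PosSemidef := by
  rw [← Matrix.le_iff, Complex.coe_smul, ← Algebra.algebraMap_eq_smul_one]
  refine le_algebraMap_of_spectrum_le (fun x hx => ?_) hA.isSelfAdjoint
  obtain ⟨i, rfl⟩ := hA.spectrum_real_eq_range_eigenvalues ▸ hx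
  exact hA.eigenvalues_le_eigDesc_zero i

open scoped MatrixOrder in
lemma eigDesc_le_one (hA : A.IsHermitian) (hA1 : (1 - A).PosSemidef) (j : Fin n) :
    eigDesc hA j ≤ 1 :=
  (CFC.le_one_iff A hA.isSelfAdjoint).mp (Matrix.le_iff.mpr hA1) _
    (hA.spectrum_real_eq_range_eigenvalues ▸ Set.mem_range_self _)

end Matrix.IsHermitian

section vecEnorm

variable {n : ℕ}

lemma vecEnorm_nonneg (v : Fin n → ℂ) : 0 ≤ vecEnorm v := Real.sqrt_nonneg _

lemma ofReal_vecEnorm_sq (v : Fin n → ℂ) : (vecEnorm v : ℂ) ^ 2 = star v ⬝ᵥ v := by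
  rw [← Complex.ofReal_pow, vecEnorm, Real.sq_sqrt (by positivity)]
  simp [dotProduct, Complex.conj_mul']

lemma Matrix.IsHermitian.norm_mul_vecEnorm_le {M : Matrix (Fin n) (Fin n) ℂ}
    (hM : M.IsHermitian) {c d : ℂ} (hcd : (star c * d).re = 0) (φ : Fin n → ℂ) :
    ‖c‖ * vecEnorm φ ≤ vecEnorm (c • φ + d • M *ᵥ φ) := by
  set ψ := M *ᵥ φ
  have hψφ : star ψ ⬝ᵥ φ = star φ ⬝ᵥ ψ := by
    rw [star_dotProduct, hM.star_dotProduct_mulVec_self]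
  have hcross : star c * d + star d * c = 0 := by
    have : star d * c = star (star c * d) := by simp [mul_comm]
    rw [this, Complex.star_def, Complex.add_conj, ← Complex.star_def, hcd, mul_zero,
      Complex.ofReal_zero]
  have hpyth : (vecEnorm (c • φ + d • ψ) : ℂ) ^ 2
      = (‖c‖ : ℂ) ^ 2 * (vecEnorm φ : ℂ) ^ 2 + (‖d‖ : ℂ) ^ 2 * (vecEnorm ψ : ℂ) ^ 2 := by
    simp only [ofReal_vecEnorm_sq, ← Complex.conj_mul', ← Complex.star_def, star_add, star_smul,
      add_dotProduct, dotProduct_add, smul_dotProduct, dotProduct_smul, smul_eq_mul, hψφ]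
    linear_combination (star φ ⬝ᵥ ψ) * hcross
  have hsq : (‖c‖ * vecEnorm φ) ^ 2 ≤ vecEnorm (c • φ + d • ψ) ^ 2 := by
    have hpyth' : vecEnorm (c • φ + d • ψ) ^ 2
        = ‖c‖ ^ 2 * vecEnorm φ ^ 2 + ‖d‖ ^ 2 * vecEnorm ψ ^ 2 := by exact_mod_cast hpyth
    rw [mul_pow, hpyth']
    nlinarith [sq_nonneg ‖d‖, sq_nonneg (vecEnorm ψ)]
  exact (sq_le_sq₀ (mul_nonneg (norm_nonneg c) (vecEnorm_nonneg φ)) (vecEnorm_nonneg _)).mp hsq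

lemma min_mul_vecEnorm_le_vecEnorm_smul_sub_I_smul_mulVec {X Y : Matrix (Fin n) (Fin n) ℂ}
    (hX : X.IsHermitian) (hY : Y.IsHermitian) {s r : ℝ}
    (hs : 0 ≤ s) (hr : 0 ≤ r) {φ : Fin n → ℂ} (hφ : X *ᵥ φ = φ ∨ Y *ᵥ φ = φ) :
    min s r * vecEnorm φ ≤ vecEnorm (((s : ℂ) • X - (Complex.I * r) • Y) *ᵥ φ) := by
  rw [sub_eq_add_neg, ← neg_smul, add_mulVec, smul_mulVec, smul_mulVec]
  rcases hφ with hφ | hφ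
  · calc min s r * vecEnorm φ ≤ ‖(s : ℂ)‖ * vecEnorm φ := by
          gcongr
          · exact vecEnorm_nonneg φ
          · simp [abs_of_nonneg hs]
      _ ≤ _ := by
          rw [hφ]
          exact hY.norm_mul_vecEnorm_le (by simp) φ
  · calc min s r * vecEnorm φ ≤ ‖-(Complex.I * r)‖ * vecEnorm φ := by
          gcongr
          · exact vecEnorm_nonneg φ
          · simp [abs_of_nonneg hr]
      _ ≤ _ := by
          rw [hφ, add_comm]
          exact hX.norm_mul_vecEnorm_le (by simp) φ

end vecEnorm

theorem stmt_16 {n : ℕ} [NeZero n] (t : ℝ) (ht : t ∈ Set.Ioo (0 : ℝ) 1)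
    (A B X Y Z : Matrix (Fin n) (Fin n) ℂ)
    (hA : A.PosSemidef) (hB : B.PosSemidef)
    (hA1 : (1 - A).PosSemidef) (hB1 : (1 - B).PosSemidef)
    (hX : X = (eigDesc hA.isHermitian 0 : ℂ) • 1 - A)
    (hY : Y = (eigDesc hB.isHermitian 0 : ℂ) • 1 - B)
    (hZ : Z = (Real.sqrt t : ℂ) • X + (Complex.I * (Real.sqrt (1 - t) : ℂ)) • Y) :
    (∀ φ : Fin n → ℂ, (X *ᵥ φ = φ ∨ Y *ᵥ φ = φ) →
        Real.sqrt (t * (1 - t)) * vecEnorm φ ≤ vecEnorm (Zᴴ *ᵥ φ)) ∧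
    ∀ φ : Fin n → ℂ,
      ((t : ℂ) • (X - X * X) + ((1 - t : ℝ) : ℂ) • (Y - Y * Y) + Z * Zᴴ) *ᵥ φ = 0 →
        X *ᵥ φ = 0 ∧ Y *ᵥ φ = 0 ∧
        A *ᵥ φ = (eigDesc hA.isHermitian 0 : ℂ) • φ ∧
        B *ᵥ φ = (eigDesc hB.isHermitian 0 : ℂ) • φ := by
  obtain ⟨ht0, ht1⟩ := ht
  have hX0 : X.PosSemidef := hX ▸ hA.isHermitian.posSemidef_eigDesc_zero_smul_one_sub
  have hY0 : Y.PosSemidef := hY ▸ hB.isHermitian.posSemidef_eigDesc_zero_smul_one_sub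
  have hX1 : (1 - X).PosSemidef :=
    hX ▸ hA.one_sub_smul_one_sub (hA.isHermitian.eigDesc_le_one hA1 0)
  have hY1 : (1 - Y).PosSemidef :=
    hY ▸ hB.one_sub_smul_one_sub (hB.isHermitian.eigDesc_le_one hB1 0)
  have hZt : Zᴴ = (Real.sqrt t : ℂ) • X - (Complex.I * (Real.sqrt (1 - t) : ℂ)) • Y := by
    rw [hZ, conjTranspose_add, conjTranspose_smul, conjTranspose_smul, hX0.isHermitian.eq,
      hY0.isHermitian.eq]
    simp [Complex.conj_ofReal, sub_eq_add_neg]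
  refine ⟨fun φ hφ => ?_, fun φ hφ => ?_⟩
  · refine le_trans ?_ (hZt ▸ min_mul_vecEnorm_le_vecEnorm_smul_sub_I_smul_mulVec
      hX0.isHermitian hY0.isHermitian (Real.sqrt_nonneg t) (Real.sqrt_nonneg _) hφ)
    gcongr
    · exact vecEnorm_nonneg φ
    · exact le_min (Real.sqrt_le_sqrt (by nlinarith)) (Real.sqrt_le_sqrt (by nlinarith))
  · have hP : ((t : ℂ) • (X - X * X) + ((1 - t : ℝ) : ℂ) • (Y - Y * Y)).PosSemidef :=
      ((hX0.sub_mul_self_s16 hX1).smul (Complex.zero_le_real.mpr ht0.le)).add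
        ((hY0.sub_mul_self_s16 hY1).smul (Complex.zero_le_real.mpr (sub_nonneg.mpr ht1.le)))
    have hZφ : Zᴴ *ᵥ φ = 0 := (self_mul_conjTranspose_mulVec_eq_zero Z φ).mp
      (hP.mulVec_eq_zero_of_add_mulVec_eq_zero (posSemidef_self_mul_conjTranspose Z) hφ).2
    obtain ⟨hXφ, hYφ⟩ := hX0.mulVec_eq_zero_of_smul_sub_I_smul_mulVec_eq_zero hY0
      (Real.sqrt_pos.mpr ht0).ne' (Real.sqrt_pos.mpr (sub_pos.mpr ht1)).ne' (hZt ▸ hZφ)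
    refine ⟨hXφ, hYφ, ?_, ?_⟩
    · rw [hX, sub_mulVec, smul_mulVec, one_mulVec, sub_eq_zero] at hXφ
      exact hXφ.symm
    · rw [hY, sub_mulVec, smul_mulVec, one_mulVec, sub_eq_zero] at hYφ
      exact hYφ.symm
end
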